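/- arXiv:2305.09001 — 2 statements merged into one kernel-verified Lean document; each statement's English description precedes it below -/
import Mathlib

section
/- The set of points where a convex function u : ℝⁿ → ℝ is not differentiable is contained in a countable union of Lipschitz hypersurfaces (Lipschitz (n−1)-dimensional surfaces). -/
open Set

/-- A Lipschitz `n`-dimensional surface (hypersurface) in `ℝ^{n+1}`: the graph, in some
orthonormal coordinate system, of a Lipschitz function from an open subset of `ℝ^n` to `ℝ`. -/
def IsLipschitzHypersurface (n : ℕ) (S : Set (EuclideanSpace ℝ (Fin (n + 1)))) : Prop :=
  ∃ (e : EuclideanSpace ℝ (Fin (n + 1)) ≃ₗᵢ[ℝ] EuclideanSpace ℝ (Fin (n + 1)))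
    (U : Set (EuclideanSpace ℝ (Fin n))) (f : EuclideanSpace ℝ (Fin n) → ℝ) (K : NNReal),
    IsOpen U ∧ LipschitzWith K f ∧
    S = e ⁻¹' {x | (WithLp.toLp 2 (fun i : Fin n => x i.castSucc) : EuclideanSpace ℝ (Fin n)) ∈ U ∧
          x (Fin.last n) = f (WithLp.toLp 2 (fun i : Fin n => x i.castSucc) : EuclideanSpace ℝ (Fin n))}

/-!
If `u` is convex and not differentiable at `x`, then it is already not differentiable along some
coordinate direction `eᵢ` (a convex function that is differentiable along a basis is
differentiable: Jensen's inequality bounds `u` above by the one-dimensional expansions, and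
convexity at `x` bounds it below). So the left and right derivatives of `t ↦ u (x + t eᵢ)` at `0`
are separated by two rationals `p < q`. On a ball where `u` is `L`-Lipschitz, the points with such
a kink at the same `i, p, q` have their `i`-th coordinate `2L / (q - p)`-Lipschitz in the other
coordinates, hence lie on a Lipschitz graph (McShane extension). Countably many choices of
`i, p, q` and of the ball cover the whole non-differentiability set.
-/

open Metric Filter Topology Asymptotics
open scoped NNReal

theorem ConvexOn.exists_rat_supporting_slopes_of_not_differentiableAt {h : ℝ → ℝ}
    (hh : ConvexOn ℝ univ h) {x : ℝ} (hx : ¬ DifferentiableAt ℝ h x) :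
    ∃ p q : ℚ, p < q ∧ (∀ y, x ≤ y → h x + q * (y - x) ≤ h y) ∧
      ∀ y, y ≤ x → h x + p * (y - x) ≤ h y := by
  have hxi : x ∈ interior univ := by simp
  have hlr : derivWithin h (Iio x) x < derivWithin h (Ioi x) x := by
    refine (hh.leftDeriv_le_rightDeriv_of_mem_interior hxi).lt_of_ne fun heq => hx ?_
    have hl := hh.hasDerivWithinAt_leftDeriv_of_mem_interior hxi
    have hr := hh.hasDerivWithinAt_rightDeriv_of_mem_interior hxi
    rw [heq] at hl
    have := hl.Iic_of_Iio.union hr.Ici_of_Ioi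
    rw [Iic_union_Ici, hasDerivWithinAt_univ] at this
    exact this.differentiableAt
  obtain ⟨p, hlp, hpr⟩ := exists_rat_btwn hlr
  obtain ⟨q, hpq, hqr⟩ := exists_rat_btwn hpr
  refine ⟨p, q, by exact_mod_cast hpq, fun y hxy => ?_, fun y hyx => ?_⟩
  · rcases hxy.eq_or_lt with rfl | hxy
    · simp
    have := hqr.le.trans (hh.rightDeriv_le_slope_of_mem_interior hxi (mem_univ y) hxy)
    rw [slope_def_field, le_div_iff₀ (sub_pos.2 hxy)] at this
    linarith
  · rcases hyx.eq_or_lt with rfl | hyx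
    · simp
    have := (hh.slope_le_leftDeriv_of_mem_interior (mem_univ y) hxi hyx).trans hlp.le
    rw [slope_def_field, div_le_iff₀ (sub_pos.2 hyx)] at this
    linarith

section Differentiability

variable {E : Type*} [NormedAddCommGroup E] [NormedSpace ℝ E]
  {ι : Type*} [Fintype ι] (b : Module.Basis ι ℝ E)

theorem ConvexOn.isLittleO_of_isLittleO_smul_basis [Nonempty ι] {g : E → ℝ}
    (hg : ConvexOn ℝ univ g) (hg0 : g 0 = 0)
    (h : ∀ i, (fun t : ℝ => g (t • b i)) =o[𝓝 0] fun t => t) :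
    g =o[𝓝 0] fun v => v := by
  set N : ℝ := (Fintype.card ι : ℝ)
  have hN : 0 < N := by simp [N, Fintype.card_pos]
  -- `g v ≤ ψ v` is Jensen's inequality for `v = ∑ i, N⁻¹ • (N * vᵢ) • b i`.
  set ψ : E → ℝ := fun v => ∑ i, N⁻¹ * g ((N * b.equivFunL v i) • b i)
  have hψ : ψ =o[𝓝 0] fun v => v := by
    refine IsLittleO.fun_sum fun i _ => IsLittleO.const_mul_left ?_ _
    let c : E →L[ℝ] ℝ := N • (ContinuousLinearMap.proj i).comp b.equivFunL.toContinuousLinearMap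
    have hc : Tendsto c (𝓝 0) (𝓝 0) := by simpa using c.continuous.tendsto 0
    exact ((h i).comp_tendsto hc).trans_isBigO (c.isBigO_id _)
  have hle : ∀ v, g v ≤ ψ v := by
    intro v
    have hv : ∑ i, N⁻¹ • (N * b.equivFunL v i) • b i = v := by
      simp_rw [smul_smul, inv_mul_cancel_left₀ hN.ne', b.equivFunL_apply]
      exact b.sum_repr v
    have := hg.map_sum_le (t := Finset.univ) (w := fun _ => N⁻¹)
      (p := fun i => (N * b.equivFunL v i) • b i) (fun _ _ => by positivity)
      (by simp [N, hN.ne']) (fun _ _ => mem_univ _)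
    simpa only [hv, smul_eq_mul] using this
  have hge : ∀ v, -ψ (-v) ≤ g v := by
    intro v
    have := hg.2 (mem_univ v) (mem_univ (-v)) (by norm_num : (0 : ℝ) ≤ 1 / 2)
      (by norm_num : (0 : ℝ) ≤ 1 / 2) (by norm_num)
    rw [smul_neg, add_neg_cancel, hg0, smul_eq_mul, smul_eq_mul] at this
    linarith [hle (-v)]
  have hψneg : (fun v => ψ (-v)) =o[𝓝 0] fun v => v :=
    ((hψ.comp_tendsto (continuous_neg.tendsto' 0 0 neg_zero)).neg_right).congr_right (by simp)
  refine IsBigO.trans_isLittleO (isBigO_of_le _ fun v => ?_) (hψ.norm_left.add hψneg.norm_left)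
  simp only [Real.norm_eq_abs]
  rw [abs_le, abs_of_nonneg (add_nonneg (abs_nonneg _) (abs_nonneg _))]
  constructor <;> linarith [hle v, hge v, le_abs_self (ψ v), le_abs_self (ψ (-v)),
    abs_nonneg (ψ v), abs_nonneg (ψ (-v))]

theorem ConvexOn.differentiableAt_of_differentiableAt_smul_basis [FiniteDimensional ℝ E]
    [Nonempty ι] {u : E → ℝ} (hu : ConvexOn ℝ univ u) {x : E}
    (h : ∀ i, DifferentiableAt ℝ (fun t : ℝ => u (x + t • b i)) 0) :
    DifferentiableAt ℝ u x := by
  let ℓ : E →L[ℝ] ℝ :=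
    LinearMap.toContinuousLinearMap (b.constr ℝ fun i => deriv (fun t : ℝ => u (x + t • b i)) 0)
  have hg : ConvexOn ℝ univ fun v => u (x + v) - u x - ℓ v :=
    ((hu.translate_right x).add_const (-u x)).sub ((ℓ : E →ₗ[ℝ] ℝ).concaveOn convex_univ)
  refine ⟨ℓ, hasFDerivAt_iff_isLittleO_nhds_zero.2
    (hg.isLittleO_of_isLittleO_smul_basis b (by simp) fun i => ?_)⟩
  have hℓ : ℓ (b i) = deriv (fun t : ℝ => u (x + t • b i)) 0 := b.constr_basis ℝ _ i
  simpa only [map_smul, hℓ, smul_eq_mul, mul_comm, zero_add, zero_smul, add_zero] using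
    hasDerivAt_iff_isLittleO_nhds_zero.1 (h i).hasDerivAt

end Differentiability

/-- For convex `u`, membership of `x` says that the left derivative of `t ↦ u (x + t • v)` at `0`
is at most `p` and the right derivative at least `q`. -/
def kinkSet {E : Type*} [AddCommGroup E] [Module ℝ E] (u : E → ℝ) (v : E) (p q : ℝ) : Set E :=
  {x | (∀ t, 0 ≤ t → u x + q * t ≤ u (x + t • v)) ∧ ∀ t, t ≤ 0 → u x + p * t ≤ u (x + t • v)}

theorem kinkSet_preimage_linearEquiv {E F : Type*} [AddCommGroup E] [Module ℝ E] [AddCommGroup F]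
    [Module ℝ F] (e : E ≃ₗ[ℝ] F) (u : E → ℝ) (v : E) (p q : ℝ) :
    e ⁻¹' kinkSet (u ∘ e.symm) (e v) p q = kinkSet u v p q := by
  ext x
  simp [kinkSet]

theorem sub_mul_le_of_mem_kinkSet {E : Type*} [SeminormedAddCommGroup E] [Module ℝ E]
    {u : E → ℝ} {s : Set E} {L : ℝ≥0} (hL : LipschitzOnWith L u s) {v x y : E} {p q d : ℝ}
    (hx : x ∈ kinkSet u v p q) (hy : y ∈ kinkSet u v p q) (hd : 0 ≤ d) (hxs : x ∈ s)
    (hys : y ∈ s) (hxd : x + d • v ∈ s) (hyd : y + (-d) • v ∈ s) :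
    (q - p) * d ≤ 2 * L * ‖y - x - d • v‖ := by
  -- The supporting lines at `x` (forward by `d`) and at `y` (backward by `d`) gain `(q - p) * d`;
  -- comparing each shifted point with the other base point costs `L * ‖y - x - d • v‖`.
  have hx' := hx.1 d hd
  have hy' := hy.2 (-d) (neg_nonpos.2 hd)
  have h₁ : u (x + d • v) - u y ≤ L * ‖y - x - d • v‖ := by
    refine (le_abs_self _).trans ?_
    rw [← Real.dist_eq, show ‖y - x - d • v‖ = dist (x + d • v) y by
      rw [dist_eq_norm, ← norm_neg]; congr 1; abel]
    exact hL.dist_le_mul _ hxd _ hys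
  have h₂ : u (y + (-d) • v) - u x ≤ L * ‖y - x - d • v‖ := by
    refine (le_abs_self _).trans ?_
    rw [← Real.dist_eq, show ‖y - x - d • v‖ = dist (y + (-d) • v) x by
      rw [dist_eq_norm, neg_smul]; congr 1; abel]
    exact hL.dist_le_mul _ hyd _ hxs
  rw [mul_neg] at hy'
  linarith

namespace EuclideanSpace

variable {n : ℕ}

def init (x : EuclideanSpace ℝ (Fin (n + 1))) : EuclideanSpace ℝ (Fin n) :=
  WithLp.toLp 2 fun i => x i.castSucc

theorem init_sub (x y : EuclideanSpace ℝ (Fin (n + 1))) : init (x - y) = init x - init y := by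
  ext i
  simp [init]

theorem norm_sub_smul_single_last (x : EuclideanSpace ℝ (Fin (n + 1))) :
    ‖x - x (Fin.last n) • EuclideanSpace.single (Fin.last n) 1‖ = ‖init x‖ := by
  simp [EuclideanSpace.norm_eq, Fin.sum_univ_castSucc, init, (Fin.castSucc_lt_last _).ne]

end EuclideanSpace

open EuclideanSpace

section Hypersurfaces

variable {n : ℕ}

theorem isLipschitzHypersurface_empty : IsLipschitzHypersurface n ∅ :=
  ⟨LinearIsometryEquiv.refl ℝ _, ∅, fun _ => 0, 0, isOpen_empty, LipschitzWith.const 0, by simp⟩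

theorem IsLipschitzHypersurface.preimage {S : Set (EuclideanSpace ℝ (Fin (n + 1)))}
    (hS : IsLipschitzHypersurface n S)
    (e : EuclideanSpace ℝ (Fin (n + 1)) ≃ₗᵢ[ℝ] EuclideanSpace ℝ (Fin (n + 1))) :
    IsLipschitzHypersurface n (e ⁻¹' S) := by
  obtain ⟨e', U, f, K, hU, hf, rfl⟩ := hS
  exact ⟨e.trans e', U, f, K, hU, hf, rfl⟩

theorem exists_isLipschitzHypersurface_superset_of_dist_last_le
    {A : Set (EuclideanSpace ℝ (Fin (n + 1)))} {K : ℝ≥0}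
    (hA : ∀ x ∈ A, ∀ y ∈ A, dist (x (Fin.last n)) (y (Fin.last n)) ≤ K * dist (init x) (init y)) :
    ∃ S, IsLipschitzHypersurface n S ∧ A ⊆ S := by
  set f : EuclideanSpace ℝ (Fin n) → ℝ := fun z => Function.invFunOn init A z (Fin.last n)
  have hf : ∀ x ∈ A, f (init x) = x (Fin.last n) := by
    intro x hx
    have hex : ∃ y ∈ A, init y = init x := ⟨x, hx, rfl⟩
    simpa [Function.invFunOn_eq hex] using hA _ (Function.invFunOn_mem hex) x hx
  have hlip : LipschitzOnWith K f (init '' A) := by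
    refine LipschitzOnWith.of_dist_le_mul ?_
    rintro _ ⟨x, hx, rfl⟩ _ ⟨y, hy, rfl⟩
    rw [hf x hx, hf y hy]
    exact hA x hx y hy
  obtain ⟨g, hg, hfg⟩ := hlip.extend_real
  refine ⟨_, ⟨LinearIsometryEquiv.refl ℝ _, univ, g, K, isOpen_univ, hg, rfl⟩,
    fun x hx => ⟨mem_univ _, ?_⟩⟩
  change x (Fin.last n) = g (init x)
  rw [← hfg ⟨x, hx, rfl⟩, hf x hx]

theorem last_sub_le_of_mem_kinkSet {w : EuclideanSpace ℝ (Fin (n + 1)) → ℝ} {L : ℝ≥0} {R : ℝ}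
    (hL : LipschitzOnWith L w (closedBall 0 (3 * R))) {p q : ℝ} (hpq : p < q)
    {x y : EuclideanSpace ℝ (Fin (n + 1))}
    (hx : x ∈ kinkSet w (EuclideanSpace.single (Fin.last n) 1) p q ∩ ball 0 R)
    (hy : y ∈ kinkSet w (EuclideanSpace.single (Fin.last n) 1) p q ∩ ball 0 R) :
    y (Fin.last n) - x (Fin.last n) ≤ 2 * L / (q - p) * dist (init y) (init x) := by
  set v : EuclideanSpace ℝ (Fin (n + 1)) := EuclideanSpace.single (Fin.last n) 1
  obtain ⟨hxk, hxR⟩ := hx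
  obtain ⟨hyk, hyR⟩ := hy
  rw [mem_ball_zero_iff] at hxR hyR
  set d := y (Fin.last n) - x (Fin.last n)
  rcases le_or_gt d 0 with hd | hd
  · exact hd.trans (by positivity [sub_pos.2 hpq])
  have hd' : |d| < 2 * R := by
    have hx := PiLp.norm_apply_le x (Fin.last n)
    have hy := PiLp.norm_apply_le y (Fin.last n)
    rw [Real.norm_eq_abs] at hx hy
    linarith [abs_sub (y (Fin.last n)) (x (Fin.last n))]
  have hnorm : ∀ (z : EuclideanSpace ℝ (Fin (n + 1))) (t : ℝ), ‖z + t • v‖ ≤ ‖z‖ + |t| := by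
    intro z t
    simpa [norm_smul, v] using norm_add_le z (t • v)
  have hmem : ∀ z, ‖z‖ < 3 * R → z ∈ closedBall (0 : EuclideanSpace ℝ (Fin (n + 1))) (3 * R) :=
    fun z hz => mem_closedBall_zero_iff.2 hz.le
  have hdist : ‖y - x - d • v‖ = dist (init y) (init x) := by
    rw [dist_eq_norm, ← init_sub, ← norm_sub_smul_single_last]
    simp [d, v]
  have := sub_mul_le_of_mem_kinkSet hL hxk hyk hd.le (hmem x (by linarith [norm_nonneg x]))
    (hmem y (by linarith [norm_nonneg y]))
    (hmem _ (by linarith [hnorm x d])) (hmem _ (by linarith [hnorm y (-d), abs_neg d]))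
  rw [div_mul_eq_mul_div, le_div_iff₀ (sub_pos.2 hpq), ← hdist]
  linarith

theorem ConvexOn.exists_isLipschitzHypersurface_superset_kinkSet_last
    {w : EuclideanSpace ℝ (Fin (n + 1)) → ℝ} (hw : ConvexOn ℝ univ w) {p q : ℝ} (hpq : p < q)
    (R : ℝ) : ∃ S, IsLipschitzHypersurface n S ∧
      kinkSet w (EuclideanSpace.single (Fin.last n) 1) p q ∩ ball 0 R ⊆ S := by
  obtain ⟨L, hL⟩ := hw.locallyLipschitz.locallyLipschitzOn.exists_lipschitzOnWith_of_compact
    (isCompact_closedBall (0 : EuclideanSpace ℝ (Fin (n + 1))) (3 * R))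
  refine exists_isLipschitzHypersurface_superset_of_dist_last_le
    (K := (2 * L / (q - p)).toNNReal) fun x hx y hy => ?_
  rw [Real.coe_toNNReal _ (by positivity [sub_pos.2 hpq]), Real.dist_eq, abs_sub_le_iff]
  refine ⟨last_sub_le_of_mem_kinkSet hL hpq hy hx, ?_⟩
  rw [dist_comm]
  exact last_sub_le_of_mem_kinkSet hL hpq hx hy

theorem ConvexOn.exists_isLipschitzHypersurface_superset_kinkSet
    {u : EuclideanSpace ℝ (Fin (n + 1)) → ℝ} (hu : ConvexOn ℝ univ u) (i : Fin (n + 1))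
    {p q : ℝ} (hpq : p < q) (R : ℝ) : ∃ S, IsLipschitzHypersurface n S ∧
      kinkSet u (EuclideanSpace.single i 1) p q ∩ ball 0 R ⊆ S := by
  let e := LinearIsometryEquiv.piLpCongrLeft 2 ℝ ℝ (Equiv.swap i (Fin.last n))
  have he : e (EuclideanSpace.single i 1) = EuclideanSpace.single (Fin.last n) 1 := by
    simpa using LinearIsometryEquiv.piLpCongrLeft_single (Equiv.swap i (Fin.last n)) i (1 : ℝ)
  obtain ⟨S, hS, hAS⟩ := (hu.comp_linearMap e.symm.toLinearEquiv.toLinearMap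
    ).exists_isLipschitzHypersurface_superset_kinkSet_last hpq R
  refine ⟨e ⁻¹' S, hS.preimage e, fun x ⟨hxk, hxR⟩ => hAS ⟨?_, by simpa using hxR⟩⟩
  rw [← kinkSet_preimage_linearEquiv e.toLinearEquiv] at hxk
  simpa [he] using hxk

def IsCoveredByLipschitzHypersurfaces (n : ℕ) (s : Set (EuclideanSpace ℝ (Fin (n + 1)))) :
    Prop :=
  ∃ S : ℕ → Set (EuclideanSpace ℝ (Fin (n + 1))), (∀ k, IsLipschitzHypersurface n (S k)) ∧
    s ⊆ ⋃ k, S k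

namespace IsCoveredByLipschitzHypersurfaces

variable {s t : Set (EuclideanSpace ℝ (Fin (n + 1)))}

theorem mono (ht : IsCoveredByLipschitzHypersurfaces n t) (hst : s ⊆ t) :
    IsCoveredByLipschitzHypersurfaces n s :=
  let ⟨S, hS, htS⟩ := ht
  ⟨S, hS, hst.trans htS⟩

theorem of_subset {S : Set (EuclideanSpace ℝ (Fin (n + 1)))} (hS : IsLipschitzHypersurface n S)
    (hsS : s ⊆ S) : IsCoveredByLipschitzHypersurfaces n s :=
  ⟨fun _ => S, fun _ => hS, hsS.trans (subset_iUnion (fun _ : ℕ => S) 0)⟩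

theorem iUnion {ι : Sort*} [Countable ι] {s : ι → Set (EuclideanSpace ℝ (Fin (n + 1)))}
    (h : ∀ i, IsCoveredByLipschitzHypersurfaces n (s i)) :
    IsCoveredByLipschitzHypersurfaces n (⋃ i, s i) := by
  rcases isEmpty_or_nonempty ι with _ | _
  · exact of_subset isLipschitzHypersurface_empty (by simp)
  choose S hS hsS using h
  obtain ⟨f, hf⟩ := exists_surjective_nat (ι ×' ℕ)
  refine ⟨fun k => S (f k).1 (f k).2, fun k => hS _ _, iUnion_subset fun i => (hsS i).trans ?_⟩
  refine iUnion_subset fun k => ?_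
  obtain ⟨m, hm⟩ := hf ⟨i, k⟩
  exact subset_iUnion_of_subset m (by rw [hm])

end IsCoveredByLipschitzHypersurfaces

end Hypersurfaces

theorem ConvexOn.setOf_not_differentiableAt_subset_iUnion_kinkSet {E : Type*}
    [NormedAddCommGroup E] [NormedSpace ℝ E] [FiniteDimensional ℝ E] {ι : Type*} [Fintype ι]
    [Nonempty ι] (b : Module.Basis ι ℝ E) {u : E → ℝ} (hu : ConvexOn ℝ univ u) :
    {x | ¬ DifferentiableAt ℝ u x} ⊆
      ⋃ (i) (p : ℚ) (q : ℚ) (_ : p < q) (m : ℕ), kinkSet u (b i) p q ∩ ball 0 m := by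
  intro x hx
  obtain ⟨i, hi⟩ : ∃ i, ¬ DifferentiableAt ℝ (fun t : ℝ => u (x + t • b i)) 0 := by
    by_contra! h
    exact hx (hu.differentiableAt_of_differentiableAt_smul_basis b h)
  have hline : ConvexOn ℝ univ fun t : ℝ => u (x + t • b i) :=
    (hu.translate_right x).comp_linearMap (LinearMap.toSpanSingleton ℝ E (b i))
  obtain ⟨p, q, hpq, hq, hp⟩ := hline.exists_rat_supporting_slopes_of_not_differentiableAt hi
  obtain ⟨m, hm⟩ := exists_nat_gt ‖x‖
  simp only [mem_iUnion]
  exact ⟨i, p, q, hpq, m, ⟨fun t ht => by simpa using hq t ht, fun t ht => by simpa using hp t ht⟩,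
    mem_ball_zero_iff.2 hm⟩

/-- The set of non-differentiability points of a convex function `u : ℝ^{n+1} → ℝ` is contained
in a countable union of Lipschitz hypersurfaces. -/
theorem nondifferentiability_set_subset_countable_union_lipschitz_hypersurfaces
    (n : ℕ) (u : EuclideanSpace ℝ (Fin (n + 1)) → ℝ)
    (hu : ConvexOn ℝ Set.univ u) :
    ∃ S : ℕ → Set (EuclideanSpace ℝ (Fin (n + 1))),
      (∀ i, IsLipschitzHypersurface n (S i)) ∧
      {x | ¬ DifferentiableAt ℝ u x} ⊆ ⋃ i, S i := by
  have hcover := hu.setOf_not_differentiableAt_subset_iUnion_kinkSet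
    (EuclideanSpace.basisFun (Fin (n + 1)) ℝ).toBasis
  simp only [OrthonormalBasis.coe_toBasis, EuclideanSpace.basisFun_apply] at hcover
  refine IsCoveredByLipschitzHypersurfaces.mono ?_ hcover
  refine .iUnion fun i => .iUnion fun p => .iUnion fun q => .iUnion fun hpq => .iUnion fun m => ?_
  obtain ⟨S, hS, hsS⟩ := hu.exists_isLipschitzHypersurface_superset_kinkSet i (Rat.cast_lt.2 hpq) m
  exact .of_subset hS hsS
end

section
/- Let u : ℝⁿ → ℝ ∪ {+∞} be a lower semicontinuous convex function and suppose (∇u)_# μ = ν, where μ and ν are Borel measures on ℝⁿ that vanish on every Lipschitz (n−1)-dimensional surface. Then for every Borel set E ⊂ ℝⁿ, μ(E) = ν(∂u(E)) (mass balance formula). -/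
/-!
If `p ∈ ∂u z ∩ ∂u z'` with `z ≠ z'`, then `z` and `z'` lie on either side of a slab of some width
`δ` orthogonal to a coordinate direction `i`; monotonicity of `∂u`, applied crosswise to two such
points `p`, `p'`, makes `pᵢ` a `2R/δ`-Lipschitz function of the other coordinates of `p`. Hence the
points with two preimages under `∂u` lie on countably many Lipschitz hypersurfaces and are
`ν`-null; likewise the points with two subgradients are `μ`-null, which makes `T` `μ`-measurable.
Off the `ν`-null set, `(∂u)⁻¹` is single-valued with Borel graph (lower semicontinuity), hence
agrees with a Borel map `g`, and `T⁻¹(g⁻¹ E) ⊆ E` up to a `μ`-null set. Thus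
`ν(∂u(E)) ≤ ν(g⁻¹ E) ≤ μ(E)`, while `μ(E) ≤ μ(T⁻¹(∂u(E))) ≤ ν(∂u(E))` because `T x ∈ ∂u(x)`
`μ`-a.e.
-/

open Set MeasureTheory

/-- The subdifferential of an `ℝ ∪ {+∞}`-valued function `u` at `z`. -/
def subdiffE (n : ℕ) (u : EuclideanSpace ℝ (Fin n) → EReal)
    (z : EuclideanSpace ℝ (Fin n)) : Set (EuclideanSpace ℝ (Fin n)) :=
  {p | ∀ x, u z + ((inner ℝ p (x - z) : ℝ) : EReal) ≤ u x}

open scoped RealInnerProductSpace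

local notation "𝔼" n:max => EuclideanSpace ℝ (Fin n)

def IsMonotoneOperator {E : Type*} [NormedAddCommGroup E] [InnerProductSpace ℝ E]
    (Φ : E → Set E) : Prop :=
  ∀ ⦃z z' p p'⦄, p ∈ Φ z → p' ∈ Φ z' → 0 ≤ ⟪z - z', p - p'⟫

theorem IsMonotoneOperator.inverse {E : Type*} [NormedAddCommGroup E] [InnerProductSpace ℝ E]
    {Φ : E → Set E} (hΦ : IsMonotoneOperator Φ) : IsMonotoneOperator fun p => {z | p ∈ Φ z} :=
  fun _ _ _ _ hz hz' => by simpa only [real_inner_comm] using hΦ hz hz'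

section Subdifferential

variable {m : ℕ} {u : 𝔼 m → EReal}

theorem isMonotoneOperator_subdiffE (hbot : ∀ x, u x ≠ ⊥) {x₀ : 𝔼 m} (hx₀ : u x₀ ≠ ⊤) :
    IsMonotoneOperator (subdiffE m u) := by
  have hfin : ∀ {z p}, p ∈ subdiffE m u z → ∃ a : ℝ, u z = a := by
    intro z p hp
    refine ⟨(u z).toReal, (EReal.coe_toReal (fun htop => hx₀ ?_) (hbot z)).symm⟩
    simpa [htop] using hp x₀
  intro z z' p p' hp hp'
  obtain ⟨a, ha⟩ := hfin hp
  obtain ⟨a', ha'⟩ := hfin hp'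
  have h := hp z'
  have h' := hp' z
  rw [ha, ha', ← EReal.coe_add, EReal.coe_le_coe_iff] at h h'
  have hexpand : ⟪z - z', p - p'⟫ = -⟪p, z' - z⟫ - ⟪p', z - z'⟫ := by
    simp only [inner_sub_left, inner_sub_right, real_inner_comm]
    ring
  linarith

theorem isClosed_setOf_mem_subdiffE (hlsc : LowerSemicontinuous u) :
    IsClosed {q : 𝔼 m × 𝔼 m | q.2 ∈ subdiffE m u q.1} := by
  have hgraph : {q : 𝔼 m × 𝔼 m | q.2 ∈ subdiffE m u q.1} =
      ⋂ x, (fun q => u q.1 + ((⟪q.2, x - q.1⟫ : ℝ) : EReal)) ⁻¹' Iic (u x) := by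
    ext q
    simp [subdiffE]
  rw [hgraph]
  refine isClosed_iInter fun x => ?_
  have hinner : Continuous fun q : 𝔼 m × 𝔼 m => ((⟪q.2, x - q.1⟫ : ℝ) : EReal) :=
    continuous_coe_real_ereal.comp (by fun_prop)
  exact ((hlsc.comp continuous_fst).add' hinner.lowerSemicontinuous fun q =>
    EReal.continuousAt_add (Or.inr (EReal.coe_ne_bot _))
      (Or.inr (EReal.coe_ne_top _))).isClosed_preimage (u x)

end Subdifferential

/-- Lusin–Souslin: `q ↦ q.2` is a measurable embedding of the part of the graph lying over `A`,
so the inverse map extends measurably. -/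
theorem exists_measurable_eq_of_subsingleton {X Y : Type*} [MeasurableSpace X]
    [StandardBorelSpace X] [Nonempty X] [MeasurableSpace Y] [StandardBorelSpace Y]
    {Φ : X → Set Y} (hΦ : MeasurableSet {q : X × Y | q.2 ∈ Φ q.1}) {A : Set Y}
    (hA : MeasurableSet A) (hsub : ∀ p ∈ A, {z | p ∈ Φ z}.Subsingleton) :
    ∃ g : Y → X, Measurable g ∧ ∀ p ∈ A, ∀ z, p ∈ Φ z → g p = z := by
  set G := {q : X × Y | q.2 ∈ Φ q.1} ∩ Prod.snd ⁻¹' A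
  have := (hΦ.inter (measurable_snd hA)).standardBorel
  have hinj : Function.Injective fun q : G => q.1.2 := by
    rintro ⟨⟨z, p⟩, hz, hp⟩ ⟨⟨z', p'⟩, hz', -⟩ (rfl : p = p')
    obtain rfl := hsub p hp hz hz'
    rfl
  have hemb := (measurable_snd.comp measurable_subtype_coe).measurableEmbedding hinj
  obtain ⟨x₀⟩ := ‹Nonempty X›
  refine ⟨Function.extend (fun q : G => q.1.2) (fun q => q.1.1) fun _ => x₀,
    hemb.measurable_extend (measurable_fst.comp measurable_subtype_coe) measurable_const,
    fun p hp z hz => hinj.extend_apply _ _ (⟨(z, p), hz, hp⟩ : G)⟩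

section

variable {n : ℕ}

def dropLast (x : 𝔼 (n + 1)) : 𝔼 n := WithLp.toLp 2 fun i : Fin n => x i.castSucc

theorem continuous_dropLast : Continuous (dropLast : 𝔼 (n + 1) → 𝔼 n) := by
  unfold dropLast
  fun_prop

@[simp]
theorem dropLast_sub (x y : 𝔼 (n + 1)) : dropLast (x - y) = dropLast x - dropLast y := rfl

theorem inner_eq_inner_dropLast_add_mul (x y : 𝔼 (n + 1)) :
    ⟪x, y⟫ = ⟪dropLast x, dropLast y⟫ + x (Fin.last n) * y (Fin.last n) := by
  simp only [PiLp.inner_apply, dropLast, RCLike.inner_apply, conj_trivial, Fin.sum_univ_castSucc]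
  ring

theorem norm_dropLast_le (x : 𝔼 (n + 1)) : ‖dropLast x‖ ≤ ‖x‖ := by
  have h := inner_eq_inner_dropLast_add_mul x x
  rw [real_inner_self_eq_norm_sq, real_inner_self_eq_norm_sq] at h
  exact (pow_le_pow_iff_left₀ (norm_nonneg _) (norm_nonneg _) two_ne_zero).1
    (by nlinarith [mul_self_nonneg (x (Fin.last n))])

theorem neg_mul_norm_le_mul_last_of_inner_nonneg {a b : 𝔼 (n + 1)} (h : 0 ≤ ⟪a, b⟫) :
    -(‖a‖ * ‖dropLast b‖) ≤ a (Fin.last n) * b (Fin.last n) := by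
  rw [inner_eq_inner_dropLast_add_mul] at h
  have hcs := abs_real_inner_le_norm (dropLast a) (dropLast b)
  have := mul_le_mul_of_nonneg_right (norm_dropLast_le a) (norm_nonneg (dropLast b))
  linarith [le_abs_self ⟪dropLast a, dropLast b⟫]

theorem IsLipschitzHypersurface.measurableSet {S : Set (𝔼 (n + 1))}
    (h : IsLipschitzHypersurface n S) : MeasurableSet S := by
  obtain ⟨e, U, f, K, hU, hf, rfl⟩ := h
  refine MeasurableSet.preimage ?_ e.continuous.measurable
  exact (hU.preimage continuous_dropLast).measurableSet.inter
    (isClosed_eq (PiLp.continuous_apply 2 _ _) (hf.continuous.comp continuous_dropLast)).measurableSet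

theorem exists_isLipschitzHypersurface_superset (e : 𝔼 (n + 1) ≃ₗᵢ[ℝ] 𝔼 (n + 1)) (L : ℝ)
    {S : Set (𝔼 (n + 1))} (hS : ∀ p ∈ S, ∀ p' ∈ S,
      |e p (Fin.last n) - e p' (Fin.last n)| ≤ L * ‖dropLast (e p) - dropLast (e p')‖) :
    ∃ H, IsLipschitzHypersurface n H ∧ S ⊆ H := by
  set π : 𝔼 (n + 1) → 𝔼 n := fun p => dropLast (e p)
  set f : 𝔼 n → ℝ := fun w => e (Function.invFunOn π S w) (Fin.last n)
  have hf : ∀ p ∈ S, f (π p) = e p (Fin.last n) := by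
    intro p hp
    have hex : ∃ p₀ ∈ S, π p₀ = π p := ⟨p, hp, rfl⟩
    have h : |f (π p) - e p (Fin.last n)| ≤ L * ‖π (Function.invFunOn π S (π p)) - π p‖ :=
      hS _ (Function.invFunOn_mem hex) p hp
    rw [Function.invFunOn_eq hex, sub_self, norm_zero, mul_zero, abs_nonpos_iff, sub_eq_zero] at h
    exact h
  have hlip : LipschitzOnWith L.toNNReal f (π '' S) := by
    refine LipschitzOnWith.of_dist_le_mul ?_
    rintro _ ⟨p, hp, rfl⟩ _ ⟨p', hp', rfl⟩
    rw [hf p hp, hf p' hp', Real.dist_eq, dist_eq_norm]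
    exact (hS p hp p' hp').trans
      (mul_le_mul_of_nonneg_right (Real.le_coe_toNNReal L) (norm_nonneg _))
  obtain ⟨g, hg, hgf⟩ := hlip.extend_real
  refine ⟨_, ⟨e, univ, g, L.toNNReal, isOpen_univ, hg, rfl⟩, fun p hp => ⟨mem_univ _, ?_⟩⟩
  exact (hf p hp).symm.trans (hgf ⟨p, hp, rfl⟩)

noncomputable def swapLast (i : Fin (n + 1)) : 𝔼 (n + 1) ≃ₗᵢ[ℝ] 𝔼 (n + 1) :=
  LinearIsometryEquiv.piLpCongrLeft 2 ℝ ℝ (Equiv.swap i (Fin.last n))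

@[simp]
theorem swapLast_apply_last (i : Fin (n + 1)) (x : 𝔼 (n + 1)) :
    swapLast i x (Fin.last n) = x i := by
  simp [swapLast, Equiv.piCongrLeft'_apply, Equiv.symm_swap]

def slabCrossingSet (Φ : 𝔼 (n + 1) → Set (𝔼 (n + 1))) (e : 𝔼 (n + 1) ≃ₗᵢ[ℝ] 𝔼 (n + 1))
    (R q δ : ℝ) : Set (𝔼 (n + 1)) :=
  {p | ∃ z z', p ∈ Φ z ∧ p ∈ Φ z' ∧ ‖z‖ ≤ R ∧ ‖z'‖ ≤ R ∧
    e z (Fin.last n) ≤ q ∧ q + δ ≤ e z' (Fin.last n)}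

namespace IsMonotoneOperator

variable {Φ : 𝔼 (n + 1) → Set (𝔼 (n + 1))}

theorem neg_le_mul_sub_last (hΦ : IsMonotoneOperator Φ) (e : 𝔼 (n + 1) ≃ₗᵢ[ℝ] 𝔼 (n + 1))
    {R : ℝ} {z z' p p' : 𝔼 (n + 1)} (hp : p ∈ Φ z) (hp' : p' ∈ Φ z') (hz : ‖z‖ ≤ R)
    (hz' : ‖z'‖ ≤ R) :
    -(2 * R * ‖dropLast (e p) - dropLast (e p')‖) ≤
      (e z (Fin.last n) - e z' (Fin.last n)) * (e p (Fin.last n) - e p' (Fin.last n)) := by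
  have hinner : 0 ≤ ⟪e z - e z', e p - e p'⟫ := by
    rw [← map_sub, ← map_sub, LinearIsometryEquiv.inner_map_map]
    exact hΦ hp hp'
  have hnorm : ‖e z - e z'‖ ≤ 2 * R := by
    rw [← map_sub, LinearIsometryEquiv.norm_map]
    linarith [norm_sub_le z z']
  have hlast := neg_mul_norm_le_mul_last_of_inner_nonneg hinner
  simp only [dropLast_sub, PiLp.sub_apply] at hlast
  nlinarith [norm_nonneg (dropLast (e p) - dropLast (e p'))]

/-- Two monotonicity inequalities, between the left preimage of one point and the right preimage
of the other, bound the jump of the last coordinate in either direction. -/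
theorem abs_sub_last_le (hΦ : IsMonotoneOperator Φ) (e : 𝔼 (n + 1) ≃ₗᵢ[ℝ] 𝔼 (n + 1))
    {R q δ : ℝ} (hδ : 0 < δ) {p p' : 𝔼 (n + 1)} (hp : p ∈ slabCrossingSet Φ e R q δ)
    (hp' : p' ∈ slabCrossingSet Φ e R q δ) :
    |e p (Fin.last n) - e p' (Fin.last n)| ≤ 2 * R / δ * ‖dropLast (e p) - dropLast (e p')‖ := by
  obtain ⟨z, z', hz, hz', hzR, hz'R, hzq, hz'q⟩ := hp
  obtain ⟨w, w', hw, hw', hwR, hw'R, hwq, hw'q⟩ := hp'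
  have h₁ := hΦ.neg_le_mul_sub_last e hz' hw hz'R hwR
  have h₂ := hΦ.neg_le_mul_sub_last e hw' hz hw'R hzR
  rw [norm_sub_rev] at h₂
  rw [div_mul_eq_mul_div, le_div_iff₀ hδ]
  rcases abs_cases (e p (Fin.last n) - e p' (Fin.last n)) with ⟨habs, hs⟩ | ⟨habs, hs⟩ <;>
    rw [habs] <;> nlinarith

theorem exists_countable_lipschitzHypersurface_cover (hΦ : IsMonotoneOperator Φ) :
    ∃ 𝓗 : Set (Set (𝔼 (n + 1))), 𝓗.Countable ∧ (∀ H ∈ 𝓗, IsLipschitzHypersurface n H) ∧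
      {p | ¬ {z | p ∈ Φ z}.Subsingleton} ⊆ ⋃₀ 𝓗 := by
  have hcover (i : Fin (n + 1)) (q : ℚ) (k R : ℕ) : ∃ H, IsLipschitzHypersurface n H ∧
      slabCrossingSet Φ (swapLast i) R q (1 / (k + 1)) ⊆ H :=
    exists_isLipschitzHypersurface_superset _ _ fun _ hp _ hp' =>
      hΦ.abs_sub_last_le _ Nat.one_div_pos_of_nat hp hp'
  choose H hH hSH using hcover
  set 𝓗 := range fun x : Fin (n + 1) × ℚ × ℕ × ℕ => H x.1 x.2.1 x.2.2.1 x.2.2.2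
  have hmem {p w w' : 𝔼 (n + 1)} {i : Fin (n + 1)} (hw : p ∈ Φ w) (hw' : p ∈ Φ w')
      (hlt : w i < w' i) : p ∈ ⋃₀ 𝓗 := by
    obtain ⟨k, hk⟩ := exists_nat_one_div_lt (half_pos (sub_pos.2 hlt))
    obtain ⟨q, hwq, hq⟩ :=
      exists_rat_btwn (lt_add_of_pos_right (w i) (Nat.one_div_pos_of_nat (n := k)))
    obtain ⟨R, hR⟩ := exists_nat_ge (max ‖w‖ ‖w'‖)
    refine ⟨_, mem_range_self (i, q, k, R), hSH i q k R ⟨w, w', hw, hw', ?_, ?_, ?_, ?_⟩⟩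
    · exact (le_max_left _ _).trans hR
    · exact (le_max_right _ _).trans hR
    · simpa using hwq.le
    · simp only [swapLast_apply_last]
      linarith
  refine ⟨𝓗, countable_range _, forall_mem_range.2 fun _ => hH _ _ _ _, ?_⟩
  intro p hp
  simp only [Set.Subsingleton, not_forall, mem_ofPred_eq] at hp
  obtain ⟨z, hz, z', hz', hne⟩ := hp
  obtain ⟨i, hi⟩ : ∃ i, z i ≠ z' i := by
    by_contra! h
    exact hne (PiLp.ext h)
  rcases hi.lt_or_gt with hlt | hlt
  · exact hmem hz hz' hlt
  · exact hmem hz' hz hlt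

theorem exists_measurableSet_null_superset (hΦ : IsMonotoneOperator Φ) :
    ∃ N, MeasurableSet N ∧ {p | ¬ {z | p ∈ Φ z}.Subsingleton} ⊆ N ∧
      ∀ κ : Measure (𝔼 (n + 1)), (∀ S, IsLipschitzHypersurface n S → κ S = 0) → κ N = 0 := by
  obtain ⟨𝓗, h𝓗, hH, hcover⟩ := hΦ.exists_countable_lipschitzHypersurface_cover
  exact ⟨⋃₀ 𝓗, .sUnion h𝓗 fun H h => (hH H h).measurableSet, hcover,
    fun κ hκ => (measure_sUnion_null_iff h𝓗).2 fun H h => hκ H (hH H h)⟩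

theorem measure_eq_measure_biUnion (hΦ : IsMonotoneOperator Φ)
    (hgraph : MeasurableSet {q : 𝔼 (n + 1) × 𝔼 (n + 1) | q.2 ∈ Φ q.1})
    {μ ν : Measure (𝔼 (n + 1))} (hμ : ∀ S, IsLipschitzHypersurface n S → μ S = 0)
    (hν : ∀ S, IsLipschitzHypersurface n S → ν S = 0) {T : 𝔼 (n + 1) → 𝔼 (n + 1)}
    (hT : ∀ᵐ x ∂μ, Φ x = {T x}) (hpush : μ.map T = ν) {E : Set (𝔼 (n + 1))}
    (hE : MeasurableSet E) : μ E = ν (⋃ z ∈ E, Φ z) := by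
  obtain ⟨N, hN, hNΦ, hNnull⟩ := hΦ.exists_measurableSet_null_superset
  obtain ⟨N', hN', hN'Φ, hN'null⟩ := hΦ.inverse.exists_measurableSet_null_superset
  obtain ⟨g, hg, hgΦ⟩ := exists_measurable_eq_of_subsingleton hgraph hN.compl
    fun p hp => not_not.1 fun h => hp (hNΦ h)
  obtain ⟨g', hg', hg'Φ⟩ := exists_measurable_eq_of_subsingleton (Φ := fun p => {z | p ∈ Φ z})
    (hgraph.preimage measurable_swap) hN'.compl fun x hx => not_not.1 fun h => hx (hN'Φ h)
  have hTΦ : ∀ᵐ x ∂μ, T x ∈ Φ x := hT.mono fun x hx => hx ▸ rfl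
  have hTm : AEMeasurable T μ := by
    refine ⟨g', hg', ?_⟩
    filter_upwards [hTΦ, measure_eq_zero_iff_ae_notMem.1 (hN'null μ hμ)] with x hx hxN
    exact (hg'Φ x hxN (T x) hx).symm
  have hTN : ∀ᵐ x ∂μ, x ∉ T ⁻¹' N := measure_eq_zero_iff_ae_notMem.1 <| by
    rw [← Measure.map_apply_of_aemeasurable hTm hN, hpush, hNnull ν hν]
  apply le_antisymm
  · calc μ E ≤ μ (T ⁻¹' ⋃ z ∈ E, Φ z) := measure_mono_ae <| by
          filter_upwards [hTΦ] with x hx hxE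
          exact mem_biUnion hxE hx
      _ ≤ ν (⋃ z ∈ E, Φ z) := hpush ▸ Measure.le_map_apply hTm _
  · calc ν (⋃ z ∈ E, Φ z) ≤ ν (g ⁻¹' E) := measure_mono_ae <| by
          filter_upwards [measure_eq_zero_iff_ae_notMem.1 (hNnull ν hν)] with p hpN hp
          obtain ⟨z, hz, hpz⟩ := mem_iUnion₂.1 hp
          show g p ∈ E
          rwa [hgΦ p hpN z hpz]
      _ = μ (T ⁻¹' (g ⁻¹' E)) := by rw [← hpush, Measure.map_apply_of_aemeasurable hTm (hg hE)]
      _ ≤ μ E := measure_mono_ae <| by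
          filter_upwards [hTΦ, hTN] with x hx hxN hxE
          rwa [← hgΦ (T x) hxN x hx]

end IsMonotoneOperator

end

theorem mass_balance_formula_general (n : ℕ) (u : EuclideanSpace ℝ (Fin (n + 1)) → EReal)
    (hlsc : LowerSemicontinuous u)
    (hbot : ∀ x, u x ≠ ⊥)
    (μ ν : Measure (EuclideanSpace ℝ (Fin (n + 1))))
    (hμ : ∀ S, IsLipschitzHypersurface n S → μ S = 0)
    (hν : ∀ S, IsLipschitzHypersurface n S → ν S = 0)
    (T : EuclideanSpace ℝ (Fin (n + 1)) → EuclideanSpace ℝ (Fin (n + 1)))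
    (hT : ∀ᵐ x ∂μ, subdiffE (n + 1) u x = {T x})
    (hpush : Measure.map T μ = ν) :
    ∀ E : Set (EuclideanSpace ℝ (Fin (n + 1))), MeasurableSet E →
      μ E = ν (⋃ z ∈ E, subdiffE (n + 1) u z) := by
  intro E hE
  by_cases htop : ∀ x, u x = ⊤
  · have huniv : ∀ x, subdiffE (n + 1) u x = univ := fun x =>
      eq_univ_of_forall fun p y => by simp [htop y]
    have hμ0 : μ = 0 := by
      rw [← ae_eq_bot, ← Filter.eventually_false_iff_eq_bot]
      filter_upwards [hT] with x hx
      exact nontrivial_univ.ne_singleton ((huniv x).symm.trans hx)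
    simp [← hpush, hμ0]
  · obtain ⟨x₀, hx₀⟩ := not_forall.1 htop
    exact (isMonotoneOperator_subdiffE hbot hx₀).measure_eq_measure_biUnion
      (isClosed_setOf_mem_subdiffE hlsc).measurableSet hμ hν hT hpush hE

/-- Mass balance formula: if `u` is a lower semicontinuous convex function with values in
`ℝ ∪ {+∞}`, `(∇u)_# μ = ν` (where `T = ∇u` `μ`-a.e., i.e. the subdifferential of `u` is the
singleton `{T x}` for `μ`-a.e. `x`), and `μ`, `ν` vanish on every Lipschitz hypersurface,
then `μ(E) = ν(∂u(E))` for every Borel set `E`. -/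
theorem mass_balance_formula (n : ℕ) (u : EuclideanSpace ℝ (Fin (n + 1)) → EReal)
    (hlsc : LowerSemicontinuous u)
    (hconv : Convex ℝ {p : EuclideanSpace ℝ (Fin (n + 1)) × ℝ | u p.1 ≤ (p.2 : EReal)})
    (hbot : ∀ x, u x ≠ ⊥)
    (μ ν : Measure (EuclideanSpace ℝ (Fin (n + 1))))
    (hμ : ∀ S, IsLipschitzHypersurface n S → μ S = 0)
    (hν : ∀ S, IsLipschitzHypersurface n S → ν S = 0)
    (T : EuclideanSpace ℝ (Fin (n + 1)) → EuclideanSpace ℝ (Fin (n + 1)))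
    (hT : ∀ᵐ x ∂μ, subdiffE (n + 1) u x = {T x})
    (hpush : Measure.map T μ = ν) :
    ∀ E : Set (EuclideanSpace ℝ (Fin (n + 1))), MeasurableSet E →
      μ E = ν (⋃ z ∈ E, subdiffE (n + 1) u z) :=
  mass_balance_formula_general n u hlsc hbot μ ν hμ hν T hT hpush
end
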